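/- (Chernoff's Gaussian variance bounds.) Let N ~ N(μ, σ²) and let g : ℝ → ℝ be locally absolutely continuous with E[g(N)²] < ∞ and E[g'(N)²] < ∞. Then σ² (E[g'(N)])² ≤ Var[g(N)] ≤ σ² E[g'(N)²]. -/

import Mathlib

/-!
Let `X, Y` be independent `N(m, v)` variables with density `φ`. For a threshold `s`, the Gaussian
tail identity `E[(X - m) 1{X ≥ s}] = v φ(s)` gives
`E[(X - Y)(1{X ≥ s} - 1{Y ≥ s})] = 2 v φ(s)`, while integrating this kernel against `k(s) ds`
produces `(x - y) ∫_y^x k`. By Fubini, `E[(X - Y) ∫_Y^X k] = 2 v E[k(X)]` for every `k ∈ L¹`.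

For `k = g'` this is Stein's identity `Cov(g(X), X) = v E[g'(X)]`. For `k = g'²`, Cauchy–Schwarz
on `[y, x]` gives `(g(x) - g(y))² ≤ (x - y) ∫_y^x g'²`, hence
`2 Var g(X) = E[(g(X) - g(Y))²] ≤ 2 v E[g'(X)²]`. The lower bound is
`0 ≤ Var(g(X) - E[g'(X)] X) = Var g(X) - v E[g'(X)]²`, again by Stein's identity.
-/

open MeasureTheory ProbabilityTheory

/-- `g` is locally absolutely continuous with a.e. derivative `g'`,
expressed through the fundamental theorem of calculus. -/
def HasAEDeriv (g g' : ℝ → ℝ) : Prop :=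
  ∀ x y : ℝ, IntervalIntegrable g' MeasureTheory.volume x y ∧
    g y - g x = ∫ t in x..y, g' t

open Set Filter Topology
open scoped NNReal ENNReal Interval

section SymmetrizedCovariance

variable {α : Type*} [MeasurableSpace α] {ν : Measure α} [IsProbabilityMeasure ν]
  {f h : α → ℝ}

lemma integrable_sub_mul_sub_prod (hf : MemLp f 2 ν) (hh : MemLp h 2 ν) :
    Integrable (fun p : α × α => (f p.1 - f p.2) * (h p.1 - h p.2)) (ν.prod ν) := by
  have hf₁ := hf.integrable one_le_two
  have hh₁ := hh.integrable one_le_two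
  have hfh : Integrable (fun x => f x * h x) ν := hf.integrable_mul hh
  simp_rw [show ∀ a b c d : ℝ, (a - b) * (c - d) = (a * c + b * d) - (a * d + c * b) from
    fun _ _ _ _ => by ring]
  exact ((hfh.comp_fst ν).add (hfh.comp_snd ν)).sub
    ((hf₁.mul_prod hh₁).add (hh₁.mul_prod hf₁))

lemma integral_sub_mul_sub_prod (hf : MemLp f 2 ν) (hh : MemLp h 2 ν) :
    ∫ p, (f p.1 - f p.2) * (h p.1 - h p.2) ∂(ν.prod ν) = 2 * cov[f, h; ν] := by
  have hf₁ := hf.integrable one_le_two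
  have hh₁ := hh.integrable one_le_two
  have hfh : Integrable (fun x => f x * h x) ν := hf.integrable_mul hh
  have hdiag : Integrable (fun p : α × α => f p.1 * h p.1 + f p.2 * h p.2) (ν.prod ν) :=
    (hfh.comp_fst ν).add (hfh.comp_snd ν)
  have hcross : Integrable (fun p : α × α => f p.1 * h p.2 + h p.1 * f p.2) (ν.prod ν) :=
    (hf₁.mul_prod hh₁).add (hh₁.mul_prod hf₁)
  simp_rw [show ∀ a b c d : ℝ, (a - b) * (c - d) = (a * c + b * d) - (a * d + c * b) from
    fun _ _ _ _ => by ring]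
  rw [integral_sub hdiag hcross, integral_add (hfh.comp_fst ν) (hfh.comp_snd ν),
    integral_add (hf₁.mul_prod hh₁) (hh₁.mul_prod hf₁),
    integral_fun_fst (fun x => f x * h x), integral_fun_snd (fun x => f x * h x),
    integral_prod_mul, integral_prod_mul, covariance_eq_sub hf hh]
  simp only [probReal_univ, one_smul, Pi.mul_apply]
  ring

end SymmetrizedCovariance

lemma sq_setIntegral_le_measureReal_mul_setIntegral_sq {α : Type*} [MeasurableSpace α]
    {μ : Measure α} {t : Set α} {f : α → ℝ} (ht : μ t ≠ ∞) (hf : IntegrableOn f t μ)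
    (hf₂ : IntegrableOn (fun x => f x ^ 2) t μ) :
    (∫ x in t, f x ∂μ) ^ 2 ≤ μ.real t * ∫ x in t, f x ^ 2 ∂μ := by
  rcases eq_or_ne (μ t) 0 with ht₀ | ht₀
  · simp [Measure.restrict_eq_zero.2 ht₀]
  have hjensen := (Even.convexOn_pow even_two).map_set_average_le
    (continuous_pow 2).continuousOn isClosed_univ ht₀ ht (ae_of_all _ fun _ => mem_univ _)
    hf hf₂
  have hpos : 0 < μ.real t := ENNReal.toReal_pos ht₀ ht
  rw [setAverage_eq, setAverage_eq, smul_eq_mul, smul_eq_mul, mul_pow] at hjensen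
  have := mul_le_mul_of_nonneg_left hjensen (sq_nonneg (μ.real t))
  field_simp at this
  linarith

section GaussianDensity

variable {m : ℝ} {v : ℝ≥0}

lemma continuous_gaussianPDFReal : Continuous (gaussianPDFReal m v) := by
  rw [gaussianPDFReal_def]
  fun_prop

lemma integrable_gaussianReal_iff (hv : v ≠ 0) {f : ℝ → ℝ} :
    Integrable f (gaussianReal m v) ↔ Integrable (fun x => gaussianPDFReal m v x * f x) := by
  rw [gaussianReal_of_var_ne_zero m hv, integrable_withDensity_iff_integrable_smul'
    (measurable_gaussianPDF m v) (ae_of_all _ fun _ => gaussianPDF_lt_top)]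
  simp [toReal_gaussianPDF]

/-- The Gaussian density is bounded below on compact sets. -/
lemma locallyIntegrable_of_integrable_gaussianReal (hv : v ≠ 0)
    {f : ℝ → ℝ} (hf : Integrable f (gaussianReal m v)) : LocallyIntegrable f := by
  rw [locallyIntegrable_iff]
  intro K hK
  rcases K.eq_empty_or_nonempty with rfl | hne
  · exact integrableOn_empty
  obtain ⟨c, -, hmin⟩ :=
    hK.exists_isMinOn hne (continuous_gaussianPDFReal (m := m) (v := v)).continuousOn
  have hc : 0 < gaussianPDFReal m v c := gaussianPDFReal_pos m v c hv
  refine (((integrable_gaussianReal_iff hv).1 hf).abs.integrableOn.const_mul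
    (gaussianPDFReal m v c)⁻¹).mono' ?_ ((ae_restrict_iff' hK.measurableSet).2 ?_)
  · exact (hf.aestronglyMeasurable.mono_ac (gaussianReal_absolutelyContinuous' m hv)).restrict
  · refine ae_of_all _ fun x hx => ?_
    rw [Real.norm_eq_abs, le_inv_mul_iff₀ hc, abs_mul,
      abs_of_pos (gaussianPDFReal_pos m v x hv)]
    exact mul_le_mul_of_nonneg_right (hmin hx) (abs_nonneg _)

lemma hasDerivAt_gaussianPDFReal (x : ℝ) :
    HasDerivAt (gaussianPDFReal m v) (-((x - m) / v) * gaussianPDFReal m v x) x := by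
  have hexponent : HasDerivAt (fun y => -(y - m) ^ 2 / (2 * v)) (-((x - m) / v)) x :=
    ((((hasDerivAt_id x).sub_const m).pow 2).neg.div_const (2 * (v : ℝ))).congr_deriv
      (by field_simp; simp)
  rw [gaussianPDFReal_def]
  exact (hexponent.exp.const_mul (√(2 * Real.pi * v))⁻¹).congr_deriv (by ring)

lemma tendsto_gaussianPDFReal_atTop (hv : v ≠ 0) :
    Tendsto (gaussianPDFReal m v) atTop (𝓝 0) := by
  have hv' : (0 : ℝ) < 2 * v := by positivity
  have hsq : Tendsto (fun x => (x - m) ^ 2) atTop atTop :=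
    (tendsto_pow_atTop two_ne_zero).comp (tendsto_atTop_add_const_right _ (-m) tendsto_id)
  have := (Real.tendsto_exp_atBot.comp
    ((tendsto_neg_atTop_atBot.comp hsq).atBot_div_const hv')).const_mul (√(2 * Real.pi * v))⁻¹
  rw [gaussianPDFReal_def]
  simpa using this

lemma integral_Ioi_gaussianPDFReal_mul_sub (hv : v ≠ 0) (s : ℝ) :
    ∫ x in Ioi s, gaussianPDFReal m v x * (x - m) = v * gaussianPDFReal m v s := by
  have hint : Integrable (fun x => gaussianPDFReal m v x * (x - m)) :=
    (integrable_gaussianReal_iff hv).1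
      (((memLp_id_gaussianReal 1).integrable le_rfl).sub (integrable_const m))
  have hderiv : ∀ x ∈ Ici s, HasDerivAt (fun y => -(v * gaussianPDFReal m v y))
      (gaussianPDFReal m v x * (x - m)) x := fun x _ =>
    ((hasDerivAt_gaussianPDFReal x).const_mul (v : ℝ)).neg.congr_deriv (by field_simp)
  have hlim : Tendsto (fun y => -(v * gaussianPDFReal m v y)) atTop (𝓝 0) := by
    simpa using ((tendsto_gaussianPDFReal_atTop hv).const_mul (v : ℝ)).neg
  rw [integral_Ioi_of_hasDerivAt_of_tendsto' hderiv hint.integrableOn hlim]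
  ring

lemma memLp_indicator_Ici_gaussianReal (s : ℝ) :
    MemLp ((Ici s).indicator (1 : ℝ → ℝ)) 2 (gaussianReal m v) :=
  (memLp_const 1).indicator measurableSet_Ici

lemma covariance_id_indicator_Ici_gaussianReal (hv : v ≠ 0) (s : ℝ) :
    cov[id, (Ici s).indicator 1; gaussianReal m v] = v * gaussianPDFReal m v s := by
  have hA := memLp_indicator_Ici_gaussianReal (m := m) (v := v) s
  have hid : MemLp id 2 (gaussianReal m v) := memLp_id_gaussianReal' 2 (by simp)
  rw [covariance_eq_sub hid hA,
    show ∫ x, id x ∂gaussianReal m v = m from integral_id_gaussianReal,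
    ← integral_const_mul, ← integral_sub (hid.integrable_mul hA)
      ((hA.integrable one_le_two).const_mul m), integral_gaussianReal_eq_integral_smul hv,
    ← integral_Ioi_gaussianPDFReal_mul_sub hv s, ← integral_Ici_eq_integral_Ioi,
    ← integral_indicator measurableSet_Ici]
  congr 1 with x
  by_cases hx : s ≤ x <;> simp [indicator, hx]

end GaussianDensity

noncomputable def chernoffKernel (x y s : ℝ) : ℝ :=
  (x - y) * ((Ici s).indicator 1 x - (Ici s).indicator 1 y)

lemma chernoffKernel_eq_abs_mul_indicator (x y s : ℝ) :
    chernoffKernel x y s = |x - y| * (Ι y x).indicator 1 s := by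
  rcases le_total y x with h | h
  · rw [uIoc_of_le h, abs_of_nonneg (sub_nonneg.2 h)]
    simp only [chernoffKernel, indicator_apply, mem_Ici, mem_Ioc, Pi.one_apply]
    split_ifs <;> grind
  · rw [uIoc_of_ge h, abs_of_nonpos (sub_nonpos.2 h)]
    simp only [chernoffKernel, indicator_apply, mem_Ici, mem_Ioc, Pi.one_apply]
    split_ifs <;> grind

lemma chernoffKernel_nonneg (x y s : ℝ) : 0 ≤ chernoffKernel x y s := by
  rw [chernoffKernel_eq_abs_mul_indicator]
  exact mul_nonneg (abs_nonneg _) (indicator_nonneg (fun _ _ => zero_le_one) _)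

lemma measurable_chernoffKernel :
    Measurable fun q : (ℝ × ℝ) × ℝ => chernoffKernel q.1.1 q.1.2 q.2 := by
  simp only [chernoffKernel, indicator, mem_Ici, Pi.one_apply]
  apply Measurable.mul (by fun_prop)
  exact (Measurable.ite (measurableSet_le measurable_snd (by fun_prop)) measurable_const
    measurable_const).sub (Measurable.ite (measurableSet_le measurable_snd (by fun_prop))
    measurable_const measurable_const)

lemma integral_mul_chernoffKernel (k : ℝ → ℝ) (x y : ℝ) :
    ∫ s, k s * chernoffKernel x y s = |x - y| * ∫ s in Ι y x, k s := by
  simp_rw [chernoffKernel_eq_abs_mul_indicator, mul_left_comm (k _), integral_const_mul]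
  rw [← integral_indicator measurableSet_uIoc]
  congr 2 with s
  by_cases hs : s ∈ Ι y x <;> simp [hs]

lemma integral_mul_chernoffKernel_eq_mul_intervalIntegral (k : ℝ → ℝ) (x y : ℝ) :
    ∫ s, k s * chernoffKernel x y s = (x - y) * ∫ s in y..x, k s := by
  rw [integral_mul_chernoffKernel, intervalIntegral.intervalIntegral_eq_integral_uIoc,
    smul_eq_mul, ← mul_assoc]
  rcases le_total y x with h | h
  · simp [h, abs_of_nonneg (sub_nonneg.2 h)]
  · rcases h.eq_or_lt with rfl | h
    · simp
    · simp [not_le.2 h, abs_of_neg (sub_neg.2 h)]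

section GaussianKernel

variable {m : ℝ} {v : ℝ≥0}

lemma integrable_chernoffKernel_gaussianReal (s : ℝ) :
    Integrable (fun p : ℝ × ℝ => chernoffKernel p.1 p.2 s)
      ((gaussianReal m v).prod (gaussianReal m v)) :=
  integrable_sub_mul_sub_prod (f := id) (memLp_id_gaussianReal' 2 (by simp))
    (memLp_indicator_Ici_gaussianReal s)

lemma integral_chernoffKernel_gaussianReal (hv : v ≠ 0) (s : ℝ) :
    ∫ p, chernoffKernel p.1 p.2 s ∂(gaussianReal m v).prod (gaussianReal m v) =
      2 * v * gaussianPDFReal m v s := by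
  rw [mul_assoc, ← covariance_id_indicator_Ici_gaussianReal hv s]
  exact integral_sub_mul_sub_prod (f := id) (memLp_id_gaussianReal' 2 (by simp))
    (memLp_indicator_Ici_gaussianReal s)

lemma integrable_mul_chernoffKernel_gaussianReal (hv : v ≠ 0) {k : ℝ → ℝ}
    (hk : Integrable k (gaussianReal m v)) :
    Integrable (fun q : (ℝ × ℝ) × ℝ => k q.2 * chernoffKernel q.1.1 q.1.2 q.2)
      (((gaussianReal m v).prod (gaussianReal m v)).prod volume) := by
  have hk_vol : AEStronglyMeasurable k volume :=
    hk.aestronglyMeasurable.mono_ac (gaussianReal_absolutelyContinuous' m hv)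
  refine (integrable_prod_iff' (hk_vol.comp_snd.mul
    measurable_chernoffKernel.aestronglyMeasurable)).2 ⟨ae_of_all _ fun s =>
      (integrable_chernoffKernel_gaussianReal s).const_mul (k s), ?_⟩
  have hnorm (s : ℝ) :
      ∫ p, ‖k s * chernoffKernel p.1 p.2 s‖ ∂(gaussianReal m v).prod (gaussianReal m v) =
        2 * v * |gaussianPDFReal m v s * k s| := by
    simp_rw [norm_mul, Real.norm_eq_abs, abs_of_nonneg (chernoffKernel_nonneg _ _ _)]
    rw [integral_const_mul, integral_chernoffKernel_gaussianReal hv, abs_mul,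
      abs_of_nonneg (gaussianPDFReal_nonneg m v s)]
    ring
  exact (((integrable_gaussianReal_iff hv).1 hk).abs.const_mul _).congr
    (ae_of_all _ fun s => (hnorm s).symm)

lemma integral_integral_mul_chernoffKernel_gaussianReal (hv : v ≠ 0) {k : ℝ → ℝ}
    (hk : Integrable k (gaussianReal m v)) :
    ∫ p, (∫ s, k s * chernoffKernel p.1 p.2 s) ∂(gaussianReal m v).prod (gaussianReal m v) =
      2 * v * ∫ x, k x ∂gaussianReal m v := by
  rw [integral_integral_swap (integrable_mul_chernoffKernel_gaussianReal hv hk)]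
  simp_rw [integral_const_mul, integral_chernoffKernel_gaussianReal hv]
  rw [integral_gaussianReal_eq_integral_smul hv, ← integral_const_mul]
  congr 1 with s
  simp only [smul_eq_mul]
  ring

end GaussianKernel

namespace HasAEDeriv

variable {m : ℝ} {v : ℝ≥0} {g g' : ℝ → ℝ}

lemma continuous (hg : HasAEDeriv g g') : Continuous g := by
  have hprimitive : g = fun x => g 0 + ∫ t in (0 : ℝ)..x, g' t :=
    funext fun x => by rw [← (hg 0 x).2]; ring
  rw [hprimitive]
  exact continuous_const.add (intervalIntegral.continuous_primitive (fun a b => (hg a b).1) 0)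

lemma locallyIntegrable (hg : HasAEDeriv g g') : LocallyIntegrable g' := fun x =>
  ⟨Ioc (x - 1) (x + 1), Ioc_mem_nhds (by linarith) (by linarith),
    (intervalIntegrable_iff_integrableOn_Ioc_of_le (by linarith)).1 (hg (x - 1) (x + 1)).1⟩

lemma sub_mul_sub_eq_integral_mul_chernoffKernel (hg : HasAEDeriv g g') (x y : ℝ) :
    (g x - g y) * (x - y) = ∫ s, g' s * chernoffKernel x y s := by
  rw [integral_mul_chernoffKernel_eq_mul_intervalIntegral, ← (hg y x).2, mul_comm]

lemma sq_sub_le_integral_mul_chernoffKernel (hg : HasAEDeriv g g')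
    (hg' : LocallyIntegrable fun s => g' s ^ 2) (x y : ℝ) :
    (g x - g y) ^ 2 ≤ ∫ s, g' s ^ 2 * chernoffKernel x y s := by
  have hvol : volume.real (Ι y x) = |x - y| := by
    rw [measureReal_def, Real.volume_uIoc, ENNReal.toReal_ofReal (abs_nonneg _)]
  rw [integral_mul_chernoffKernel, ← hvol, (hg y x).2, ← sq_abs, ← Real.norm_eq_abs,
    intervalIntegral.norm_integral_eq_norm_integral_uIoc, Real.norm_eq_abs, sq_abs]
  exact sq_setIntegral_le_measureReal_mul_setIntegral_sq (by simp [Real.volume_uIoc])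
    (intervalIntegrable_iff.1 (hg y x).1)
    ((hg'.integrableOn_isCompact isCompact_uIcc).mono_set uIoc_subset_uIcc)

lemma covariance_id_gaussianReal (hg : HasAEDeriv g g') (hv : v ≠ 0)
    (hg₂ : MemLp g 2 (gaussianReal m v)) (hg' : Integrable g' (gaussianReal m v)) :
    cov[g, id; gaussianReal m v] = v * ∫ x, g' x ∂gaussianReal m v := by
  have h := integral_sub_mul_sub_prod hg₂ (memLp_id_gaussianReal' 2 (by simp) (μ := m) (v := v))
  simp_rw [id, hg.sub_mul_sub_eq_integral_mul_chernoffKernel,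
    integral_integral_mul_chernoffKernel_gaussianReal hv hg'] at h
  linarith

lemma variance_le_gaussianReal (hg : HasAEDeriv g g') (hv : v ≠ 0)
    (hg₂ : MemLp g 2 (gaussianReal m v))
    (hg'₂ : Integrable (fun x => g' x ^ 2) (gaussianReal m v)) :
    Var[g; gaussianReal m v] ≤ v * ∫ x, g' x ^ 2 ∂gaussianReal m v := by
  have hmono := integral_mono (integrable_sub_mul_sub_prod hg₂ hg₂)
    (integrable_mul_chernoffKernel_gaussianReal hv hg'₂).integral_prod_left fun p => by
      rw [← sq]
      exact hg.sq_sub_le_integral_mul_chernoffKernel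
        (locallyIntegrable_of_integrable_gaussianReal hv hg'₂) p.1 p.2
  rw [integral_sub_mul_sub_prod hg₂ hg₂, covariance_self hg₂.aemeasurable,
    integral_integral_mul_chernoffKernel_gaussianReal hv hg'₂] at hmono
  linarith

lemma le_variance_gaussianReal (hg : HasAEDeriv g g') (hv : v ≠ 0)
    (hg₂ : MemLp g 2 (gaussianReal m v)) (hg' : Integrable g' (gaussianReal m v)) :
    v * (∫ x, g' x ∂gaussianReal m v) ^ 2 ≤ Var[g; gaussianReal m v] := by
  set D := ∫ x, g' x ∂gaussianReal m v
  have hid : MemLp id 2 (gaussianReal m v) := memLp_id_gaussianReal' 2 (by simp)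
  have h := variance_nonneg (g - D • id) (gaussianReal m v)
  rw [variance_sub hg₂ (hid.const_smul D), covariance_smul_right, variance_smul,
    variance_id_gaussianReal, hg.covariance_id_gaussianReal hv hg₂ hg'] at h
  linarith

end HasAEDeriv

theorem chernoff_gaussian_bounds_general (m σ : ℝ) (hσ : 0 < σ)
    (g g' : ℝ → ℝ) (hAC : HasAEDeriv g g')
    (hg2 : Integrable (fun x => g x ^ 2) (gaussianReal m ((σ ^ 2).toNNReal)))
    (hg'2 : Integrable (fun x => g' x ^ 2) (gaussianReal m ((σ ^ 2).toNNReal))) :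
    σ ^ 2 * (∫ x, g' x ∂(gaussianReal m ((σ ^ 2).toNNReal))) ^ 2 ≤
        (∫ x, g x ^ 2 ∂(gaussianReal m ((σ ^ 2).toNNReal))) -
          (∫ x, g x ∂(gaussianReal m ((σ ^ 2).toNNReal))) ^ 2 ∧
      (∫ x, g x ^ 2 ∂(gaussianReal m ((σ ^ 2).toNNReal))) -
          (∫ x, g x ∂(gaussianReal m ((σ ^ 2).toNNReal))) ^ 2 ≤
        σ ^ 2 * ∫ x, g' x ^ 2 ∂(gaussianReal m ((σ ^ 2).toNNReal)) := by
  have hv : (σ ^ 2).toNNReal ≠ 0 := by simpa using hσ.ne'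
  have hg : MemLp g 2 (gaussianReal m (σ ^ 2).toNNReal) :=
    (memLp_two_iff_integrable_sq hAC.continuous.aestronglyMeasurable).2 hg2
  have hg' : Integrable g' (gaussianReal m (σ ^ 2).toNNReal) :=
    ((memLp_two_iff_integrable_sq (hAC.locallyIntegrable.aestronglyMeasurable.mono_ac
      (gaussianReal_absolutelyContinuous m hv))).2 hg'2).integrable one_le_two
  have hvar : Var[g; gaussianReal m (σ ^ 2).toNNReal] =
      ∫ x, g x ^ 2 ∂gaussianReal m (σ ^ 2).toNNReal -
        (∫ x, g x ∂gaussianReal m (σ ^ 2).toNNReal) ^ 2 :=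
    variance_eq_sub hg
  have hlower := hAC.le_variance_gaussianReal hv hg hg'
  have hupper := hAC.variance_le_gaussianReal hv hg hg'2
  rw [hvar, Real.coe_toNNReal _ (sq_nonneg σ)] at hlower hupper
  exact ⟨hlower, hupper⟩

/-- Chernoff's Gaussian variance bounds: for `N ~ N(m, σ²)` and `g` locally
absolutely continuous with `E[g(N)²] < ∞` and `E[g'(N)²] < ∞`,
`σ² (E[g'(N)])² ≤ Var[g(N)] ≤ σ² E[g'(N)²]`. -/
theorem chernoff_gaussian_bounds (m σ : ℝ) (hσ : 0 < σ)
    (g g' : ℝ → ℝ) (hgmeas : Measurable g) (hg'meas : Measurable g')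
    (hAC : HasAEDeriv g g')
    (hg2 : Integrable (fun x => g x ^ 2) (gaussianReal m ((σ ^ 2).toNNReal)))
    (hg'2 : Integrable (fun x => g' x ^ 2) (gaussianReal m ((σ ^ 2).toNNReal))) :
    σ ^ 2 * (∫ x, g' x ∂(gaussianReal m ((σ ^ 2).toNNReal))) ^ 2 ≤
        (∫ x, g x ^ 2 ∂(gaussianReal m ((σ ^ 2).toNNReal))) -
          (∫ x, g x ∂(gaussianReal m ((σ ^ 2).toNNReal))) ^ 2 ∧
      (∫ x, g x ^ 2 ∂(gaussianReal m ((σ ^ 2).toNNReal))) -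
          (∫ x, g x ∂(gaussianReal m ((σ ^ 2).toNNReal))) ^ 2 ≤
        σ ^ 2 * ∫ x, g' x ^ 2 ∂(gaussianReal m ((σ ^ 2).toNNReal)) :=
  chernoff_gaussian_bounds_general m σ hσ g g' hAC hg2 hg'2
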